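/- For every λ ∈ ℂ with Re λ > 1.5 and every z ∈ X₂ = {|z| > 1} ∪ {∞}, the point A_λ B₂ z satisfies |A_λ B₂ z| ≥ 5/4. (Here one uses that Re(B₂ z) > 1/3 for z ∈ X₂ and then Re(A_λ w) = Re w + Re λ > 1.5 + 1/3.) -/

import Mathlib

open OnePoint

/-- The matrix `A_λ = [[1,λ],[0,1]]` in `SL₂(ℂ)`. -/
def Amat (lam : ℂ) : Matrix.SpecialLinearGroup (Fin 2) ℂ :=
  ⟨!![1, lam; 0, 1], by simp [Matrix.det_fin_two_of]⟩

/-- The matrix `B_μ = [[1,0],[μ,1]]` in `SL₂(ℂ)`. -/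
def Bmat (mu : ℂ) : Matrix.SpecialLinearGroup (Fin 2) ℂ :=
  ⟨!![1, 0; mu, 1], by simp [Matrix.det_fin_two_of]⟩

/-- The action of `SL₂(ℂ)` on the extended complex plane `ℂ ∪ {∞}`
by Möbius transformations. -/
noncomputable def moebius (g : Matrix.SpecialLinearGroup (Fin 2) ℂ) (z : OnePoint ℂ) : OnePoint ℂ :=
  OnePoint.rec
    (if g.1 1 0 = 0 then ∞ else ((g.1 0 0 / g.1 1 0 : ℂ) : OnePoint ℂ))
    (fun w => if g.1 1 0 * w + g.1 1 1 = 0 then ∞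
      else (((g.1 0 0 * w + g.1 0 1) / (g.1 1 0 * w + g.1 1 1) : ℂ) : OnePoint ℂ)) z

/-!
`A_λ B₂` is `w ↦ λ + w` after `B₂ z = z / (2z + 1)`, and `B₂` maps `X₂` into the half-plane
`Re w > 1/3`: for `|z| > 1`, `Re (z / (2z + 1)) > 1/3` amounts to
`2|z|² - Re z - 1 > 0`, which holds since `Re z ≤ |z|` and `(2|z| + 1)(|z| - 1) > 0`;
and `B₂ ∞ = 1/2`. Hence `|A_λ B₂ z| ≥ Re (A_λ B₂ z) > 3/2 + 1/3 ≥ 5/4`.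
-/

lemma moebius_coe (g : Matrix.SpecialLinearGroup (Fin 2) ℂ) (w : ℂ) :
    moebius g w = if g.1 1 0 * w + g.1 1 1 = 0 then ∞
      else (((g.1 0 0 * w + g.1 0 1) / (g.1 1 0 * w + g.1 1 1) : ℂ) : OnePoint ℂ) := rfl

lemma moebius_infty (g : Matrix.SpecialLinearGroup (Fin 2) ℂ) :
    moebius g ∞ = if g.1 1 0 = 0 then ∞ else ((g.1 0 0 / g.1 1 0 : ℂ) : OnePoint ℂ) := rfl

lemma coe_Amat_mul_Bmat (lam mu : ℂ) :
    ((Amat lam * Bmat mu : Matrix.SpecialLinearGroup (Fin 2) ℂ) : Matrix (Fin 2) (Fin 2) ℂ) =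
      !![1 + lam * mu, lam; mu, 1] := by
  rw [Matrix.SpecialLinearGroup.coe_mul]
  ext i j
  fin_cases i <;> fin_cases j <;> simp [Amat, Bmat, Matrix.mul_apply, Fin.sum_univ_two]

lemma moebius_Amat_mul_Bmat_coe (lam mu w : ℂ) (hw : mu * w + 1 ≠ 0) :
    moebius (Amat lam * Bmat mu) w = ((lam + w / (mu * w + 1) : ℂ) : OnePoint ℂ) := by
  simp only [moebius_coe, coe_Amat_mul_Bmat, Matrix.of_apply, Matrix.cons_val',
    Matrix.cons_val_zero, Matrix.cons_val_one, Matrix.empty_val', Matrix.cons_val_fin_one,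
    if_neg hw]
  congr 1
  field_simp
  ring

lemma moebius_Amat_mul_Bmat_infty (lam : ℂ) {mu : ℂ} (hmu : mu ≠ 0) :
    moebius (Amat lam * Bmat mu) ∞ = ((lam + 1 / mu : ℂ) : OnePoint ℂ) := by
  simp only [moebius_infty, coe_Amat_mul_Bmat, Matrix.of_apply, Matrix.cons_val',
    Matrix.cons_val_zero, Matrix.cons_val_one, Matrix.empty_val', Matrix.cons_val_fin_one,
    if_neg hmu]
  congr 1
  field_simp
  ring

lemma two_mul_add_one_ne_zero {w : ℂ} (hw : 1 < ‖w‖) : 2 * w + 1 ≠ 0 := by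
  intro h
  rw [show w = -(1 / 2) by linear_combination h / 2] at hw
  norm_num at hw

lemma one_third_lt_re_div_two_mul_add_one {w : ℂ} (hw : 1 < ‖w‖) :
    1 / 3 < (w / (2 * w + 1)).re := by
  have hd := two_mul_add_one_ne_zero hw
  have hnormSq : Complex.normSq (2 * w + 1) = 4 * Complex.normSq w + 4 * w.re + 1 := by
    simp only [Complex.normSq_apply, Complex.add_re, Complex.add_im, Complex.mul_re,
      Complex.mul_im, Complex.re_ofNat, Complex.im_ofNat, Complex.one_re, Complex.one_im]
    ring
  have hre : (w / (2 * w + 1)).re =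
      (2 * Complex.normSq w + w.re) / Complex.normSq (2 * w + 1) := by
    rw [Complex.div_re, ← add_div]
    congr 1
    simp only [Complex.normSq_apply, Complex.add_re, Complex.add_im, Complex.mul_re,
      Complex.mul_im, Complex.re_ofNat, Complex.im_ofNat, Complex.one_re, Complex.one_im]
    ring
  have hpos : 0 < Complex.normSq (2 * w + 1) := Complex.normSq_pos.mpr hd
  rw [hre, lt_div_iff₀ hpos, hnormSq, Complex.normSq_eq_norm_sq]
  nlinarith [Complex.re_le_norm w]

theorem stmt_7 (lam : ℂ) (hlam : 1.5 < lam.re)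
    (z : OnePoint ℂ)
    (hz : z ∈ ((↑) : ℂ → OnePoint ℂ) '' {u : ℂ | 1 < ‖u‖} ∪ {∞}) :
    ∃ u : ℂ, moebius (Amat lam * Bmat 2) z = u ∧ 5 / 4 ≤ ‖u‖ := by
  suffices ∃ w : ℂ, 1 / 3 < w.re ∧ moebius (Amat lam * Bmat 2) z = ((lam + w : ℂ) : OnePoint ℂ) by
    obtain ⟨w, hw, hmap⟩ := this
    refine ⟨lam + w, hmap, (Complex.re_le_norm _).trans' ?_⟩
    rw [Complex.add_re]
    norm_num at hlam
    linarith
  rcases hz with ⟨w, hw, rfl⟩ | rfl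
  · exact ⟨_, one_third_lt_re_div_two_mul_add_one hw,
      moebius_Amat_mul_Bmat_coe lam 2 w (two_mul_add_one_ne_zero hw)⟩
  · exact ⟨1 / 2, by norm_num, moebius_Amat_mul_Bmat_infty lam two_ne_zero⟩
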